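/- Compactness of rate-function sublevel sets: fix s < −1/2 and v₀ ∈ L²₀(𝕋), and define I : H^s₀(𝕋) → [0, ∞] by I(f) = (1/2) Σ_{n≠0} |f_n − (v₀)_n|² if f ∈ L²₀(𝕋) and I(f) = +∞ otherwise. Then for every finite r ≥ 0, the sublevel set K_r = {f ∈ H^s₀(𝕋) : I(f) ≤ r} is a compact subset of H^s₀(𝕋) (with the H^s norm topology), and K_r ⊆ L²₀(𝕋). -/

import Mathlib

/-!
Weighting by `⟨n⟩^s` turns `H^s₀` into a closed subspace of `ℓ²(ℤ)`. If `I(f) ≤ r`, every Fourier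
coefficient of `f` lies within `√(2r)` of that of `v₀`, so the weighted sequence of `f` is dominated
coordinatewise by `|(v₀)_n| + √(2r) ⟨n⟩^s`, which is square-summable because `s < -1/2` and
`v₀ ∈ L²`. A set of `ℓ^p` sequences (`p < ∞`) dominated by a fixed `ℓ^p` sequence is compact: by
Tychonoff it is compact for the product topology, and dominated convergence shows that on it the
product and norm topologies agree. Finally `I` is lower semicontinuous, being a sum of continuous
nonnegative terms, so the sublevel set is a closed subset of this compact set.
-/

open MeasureTheory
open scoped NNReal ENNReal ComplexConjugate

/-- The weight `⟨n⟩^s = (1 + n²)^{s/2}`. -/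
noncomputable def wt (s : ℝ) (n : ℤ) : ℝ := (1 + (n : ℝ) ^ 2) ^ (s / 2)

/-- The Sobolev space `H^s₀(𝕋)` of real-valued mean-zero distributions, realized as the
space of sequences `a : ℤ → ℂ` with `a_0 = 0`, `a_{-n} = conj (a_n)` and
`∑_{n ≠ 0} ⟨n⟩^{2s} |a_n|² < ∞`: an element stores the weighted sequence `b_n = ⟨n⟩^s a_n`
(square-summable precisely when `a ∈ H^s`, with `lp`-norm equal to the `H^s` norm of `a`;
since `⟨-n⟩ = ⟨n⟩` is real, the constraints on `a` translate verbatim to `b`). The Fourier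
coefficients `a_n` are recovered via `coeff`. -/
noncomputable def Hs0 (_s : ℝ) : Submodule ℝ (lp (fun _ : ℤ => ℂ) 2) where
  carrier := {f | f 0 = 0 ∧ ∀ n : ℤ, f (-n) = conj (f n)}
  zero_mem' := by
    refine ⟨rfl, fun n => ?_⟩
    simp [lp.coeFn_zero]
  add_mem' := by
    rintro f g ⟨hf0, hfs⟩ ⟨hg0, hgs⟩
    refine ⟨?_, fun n => ?_⟩
    · simp only [lp.coeFn_add, Pi.add_apply, hf0, hg0, add_zero]
    · simp only [lp.coeFn_add, Pi.add_apply, hfs n, hgs n, map_add]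
  smul_mem' := by
    rintro c f ⟨hf0, hfs⟩
    refine ⟨?_, fun n => ?_⟩
    · simp only [lp.coeFn_smul, Pi.smul_apply, hf0, smul_zero]
    · simp only [lp.coeFn_smul, Pi.smul_apply, hfs n, Complex.real_smul, map_mul,
        Complex.conj_ofReal]

/-- The `n`-th Fourier coefficient of an element of `H^s₀(𝕋)`. -/
noncomputable def coeff (s : ℝ) (f : Hs0 s) (n : ℤ) : ℂ :=
  ((wt s n)⁻¹ : ℝ) * ((f : lp (fun _ : ℤ => ℂ) 2) n)

/-- The rate function `I : H^s₀(𝕋) → [0, ∞]`, `I(f) = (1/2) ∑_{n ≠ 0} |f_n - (v₀)_n|²`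
(an `ℝ≥0∞`-valued sum, which is finite exactly when `f ∈ L²₀(𝕋)` and `= ∞` otherwise,
for `v₀ ∈ L²₀(𝕋)`). -/
noncomputable def rate (s : ℝ) (v₀ : ℤ → ℂ) (f : Hs0 s) : ℝ≥0∞ :=
  (1 / 2) * ∑' n : {m : ℤ // m ≠ 0}, ENNReal.ofReal (‖coeff s f (n : ℤ) - v₀ (n : ℤ)‖ ^ 2)

open Filter Topology

theorem memℓp_two_iff_summable_sq {ι : Type*} {E : ι → Type*} [∀ i, NormedAddCommGroup (E i)]
    {f : ∀ i, E i} : Memℓp f 2 ↔ Summable fun i => ‖f i‖ ^ 2 := by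
  rw [memℓp_gen_iff (by norm_num)]
  norm_num

namespace lp

variable {ι : Type*} {E : ι → Type*} [∀ i, NormedAddCommGroup (E i)] {p : ℝ≥0∞} [Fact (1 ≤ p)]

theorem tendsto_of_tendsto_apply_of_norm_le {α : Type*} {l : Filter α} (hp : p ≠ ∞)
    {c : ι → ℝ} (hc : Memℓp c p) {g : α → lp E p} {x : lp E p}
    (hg : ∀ᶠ a in l, ∀ i, ‖g a i‖ ≤ c i) (h : ∀ i, Tendsto (fun a => g a i) l (𝓝 (x i))) :
    Tendsto g l (𝓝 x) := by
  have hp₀ : 0 < p.toReal := ENNReal.toReal_pos (zero_lt_one.trans_le Fact.out).ne' hp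
  have hsum : Summable fun i => ‖‖c i‖ + ‖x i‖‖ ^ p.toReal :=
    (hc.norm.add (lp.memℓp x).norm).summable hp₀
  have hpow : Tendsto (fun a => ‖g a - x‖ ^ p.toReal) l (𝓝 0) := by
    simp_rw [lp.norm_rpow_eq_tsum hp₀, lp.coeFn_sub, Pi.sub_apply]
    refine (tendsto_tsum_of_dominated_convergence hsum (g := fun _ => 0) (fun i => ?_) ?_).trans
      (by simp)
    · simpa [Real.zero_rpow hp₀.ne'] using
        (((h i).sub_const (x i)).norm.rpow_const (p := p.toReal) (Or.inr hp₀.le))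
    · filter_upwards [hg] with a ha i
      rw [Real.norm_of_nonneg (by positivity),
        Real.norm_of_nonneg (by positivity : 0 ≤ ‖c i‖ + ‖x i‖)]
      gcongr
      exact (norm_sub_le _ _).trans (by gcongr; exact (ha i).trans (Real.le_norm_self _))
  rw [tendsto_iff_norm_sub_tendsto_zero]
  simpa [← Real.rpow_mul (norm_nonneg _), mul_inv_cancel₀ hp₀.ne', Real.zero_rpow, hp₀.ne'] using
    hpow.rpow_const (p := p.toReal⁻¹) (Or.inr (by positivity))

variable [∀ i, ProperSpace (E i)]

theorem isCompact_setOf_norm_le (hp : p ≠ ∞) {c : ι → ℝ} (hc : Memℓp c p) :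
    IsCompact {f : lp E p | ∀ i, ‖f i‖ ≤ c i} := by
  rw [isCompact_iff_ultrafilter_le_nhds]
  intro 𝒰 h𝒰
  have hbox : IsCompact (Set.univ.pi fun i => Metric.closedBall (0 : E i) (c i)) :=
    isCompact_univ_pi fun i => isCompact_closedBall _ _
  have hmap : Tendsto (fun f : lp E p => (f : ∀ i, E i)) 𝒰
      (𝓟 (Set.univ.pi fun i => Metric.closedBall (0 : E i) (c i))) :=
    (tendsto_principal_principal.2 fun f hf i _ => by simpa using hf i).mono_left h𝒰
  obtain ⟨x, hx, hlim⟩ := hbox.ultrafilter_le_nhds (𝒰.map _) hmap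
  have hxc : ∀ i, ‖x i‖ ≤ c i := fun i => by simpa using hx i (Set.mem_univ i)
  refine ⟨⟨x, hc.mono hxc⟩, hxc, ?_⟩
  exact tendsto_of_tendsto_apply_of_norm_le hp hc (le_principal_iff.1 h𝒰) fun i =>
    ((continuous_apply i).tendsto x).comp hlim

end lp

theorem wt_pos (s : ℝ) (n : ℤ) : 0 < wt s n :=
  Real.rpow_pos_of_pos (by positivity) _

theorem wt_le_one {s : ℝ} (hs : s ≤ 0) (n : ℤ) : wt s n ≤ 1 :=
  Real.rpow_le_one_of_one_le_of_nonpos (le_add_of_nonneg_right (sq_nonneg _)) (by linarith)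

theorem memℓp_wt {s : ℝ} (hs : s < -(1 / 2)) : Memℓp (wt s) 2 := by
  rw [memℓp_two_iff_summable_sq]
  refine .of_norm_bounded_eventually (Real.summable_abs_int_rpow (b := -(2 * s)) (by linarith)) ?_
  filter_upwards [eventually_cofinite_ne 0] with n hn
  have hn' : 0 < (n : ℝ) ^ 2 := by positivity
  calc ‖‖wt s n‖ ^ 2‖ = ((1 + (n : ℝ) ^ 2) ^ (s / 2)) ^ 2 := by
        rw [norm_pow, norm_norm, Real.norm_of_nonneg (wt_pos s n).le, wt]
    _ ≤ (((n : ℝ) ^ 2) ^ (s / 2)) ^ 2 :=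
        pow_le_pow_left₀ (by positivity)
          (Real.rpow_le_rpow_of_nonpos hn' (by linarith) (by linarith)) 2
    _ = |(n : ℝ)| ^ (-(-(2 * s))) := by
        rw [neg_neg, ← sq_abs (n : ℝ), ← Real.rpow_natCast _ 2, ← Real.rpow_natCast _ 2,
          ← Real.rpow_mul (abs_nonneg _), ← Real.rpow_mul (abs_nonneg _)]
        ring_nf

section Hs0

variable {s : ℝ} {v₀ : ℤ → ℂ}

theorem isClosed_Hs0 (s : ℝ) : IsClosed (Hs0 s : Set (lp (fun _ : ℤ => ℂ) 2)) := by
  have eval n := (lp.lipschitzWith_one_eval (E := fun _ : ℤ => ℂ) 2 n).continuous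
  change IsClosed {f | _ ∧ _}
  rw [Set.ofPred_and, Set.ofPred_forall]
  exact (isClosed_eq (eval 0) continuous_const).inter
    (isClosed_iInter fun n => isClosed_eq (eval (-n)) (Complex.continuous_conj.comp (eval n)))

theorem continuous_coeff (s : ℝ) (n : ℤ) : Continuous fun f : Hs0 s => coeff s f n :=
  continuous_const.mul ((lp.lipschitzWith_one_eval 2 n).continuous.comp continuous_subtype_val)

theorem lowerSemicontinuous_rate (s : ℝ) (v₀ : ℤ → ℂ) : LowerSemicontinuous (rate s v₀) :=
  (ENNReal.continuous_const_mul (by norm_num)).comp_lowerSemicontinuous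
    (lowerSemicontinuous_tsum fun n => (ENNReal.continuous_ofReal.comp
      (((continuous_coeff s n).sub continuous_const).norm.pow 2)).lowerSemicontinuous)
    fun _ _ h => by dsimp only; gcongr

theorem coe_apply_eq_wt_mul_coeff (f : Hs0 s) (n : ℤ) :
    (f : lp (fun _ : ℤ => ℂ) 2) n = wt s n * coeff s f n := by
  rw [coeff, ← mul_assoc, ← Complex.ofReal_mul, mul_inv_cancel₀ (wt_pos s n).ne',
    Complex.ofReal_one, one_mul]

theorem tsum_le_two_mul_of_rate_le {f : Hs0 s} {R : ℝ≥0∞} (h : rate s v₀ f ≤ R) :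
    ∑' n : {m : ℤ // m ≠ 0}, ENNReal.ofReal (‖coeff s f n - v₀ n‖ ^ 2) ≤ 2 * R := by
  rwa [rate, one_div, ENNReal.inv_mul_le_iff two_ne_zero ENNReal.ofNat_ne_top] at h

theorem norm_coeff_sub_le_of_rate_le {f : Hs0 s} {R : ℝ≥0} (h : rate s v₀ f ≤ R) {n : ℤ}
    (hn : n ≠ 0) : ‖coeff s f n - v₀ n‖ ≤ √(2 * R) := by
  apply Real.le_sqrt_of_sq_le
  have := (ENNReal.le_tsum (⟨n, hn⟩ : {m : ℤ // m ≠ 0})).trans (tsum_le_two_mul_of_rate_le h)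
  rwa [← ENNReal.ofReal_coe_nnreal, ← ENNReal.ofReal_ofNat, ← ENNReal.ofReal_mul (by norm_num),
    ENNReal.ofReal_le_ofReal_iff (by positivity)] at this

theorem norm_coe_apply_le_of_rate_le (hs : s ≤ 0) {f : Hs0 s} {R : ℝ≥0} (h : rate s v₀ f ≤ R)
    (n : ℤ) : ‖(f : lp (fun _ : ℤ => ℂ) 2) n‖ ≤ ‖v₀ n‖ + √(2 * R) * wt s n := by
  rcases eq_or_ne n 0 with rfl | hn
  · rw [f.2.1, norm_zero]
    exact add_nonneg (norm_nonneg _) (mul_nonneg (Real.sqrt_nonneg _) (wt_pos s 0).le)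
  calc ‖(f : lp (fun _ : ℤ => ℂ) 2) n‖ = wt s n * ‖coeff s f n‖ := by
        rw [coe_apply_eq_wt_mul_coeff, norm_mul, Complex.norm_real,
          Real.norm_of_nonneg (wt_pos s n).le]
    _ ≤ wt s n * (‖v₀ n‖ + √(2 * R)) := by
        gcongr
        · exact (wt_pos s n).le
        · exact (norm_le_norm_add_norm_sub' _ (v₀ n)).trans
            (add_le_add_right (norm_coeff_sub_le_of_rate_le h hn) _)
    _ ≤ ‖v₀ n‖ + √(2 * R) * wt s n := by nlinarith [norm_nonneg (v₀ n), wt_le_one hs n]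

theorem memℓp_coeff_of_rate_ne_top (hv : Memℓp v₀ 2) {f : Hs0 s} (h : rate s v₀ f ≠ ⊤) :
    Memℓp (coeff s f) 2 := by
  have hT := ((tsum_le_two_mul_of_rate_le le_rfl).trans_lt
    (ENNReal.mul_lt_top ENNReal.ofNat_lt_top h.lt_top)).ne
  have hsub : Summable fun n : {m : ℤ // m ≠ 0} => ‖coeff s f n - v₀ n‖ ^ 2 :=
    (ENNReal.summable_toReal hT).congr fun n => ENNReal.toReal_ofReal (sq_nonneg _)
  have hdiff : Memℓp (coeff s f - v₀) 2 :=
    memℓp_two_iff_summable_sq.2 ((Set.finite_singleton 0).summable_compl_iff.1 hsub)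
  simpa using hdiff.add hv

end Hs0

theorem rate_sublevel_compact_general
    (s : ℝ) (hs : s < -(1 / 2)) (v₀ : ℤ → ℂ)
    (hvsum : Summable fun n : ℤ => ‖v₀ n‖ ^ 2)
    (r : ℝ) :
    IsCompact {f : Hs0 s | rate s v₀ f ≤ ENNReal.ofReal r} ∧
      ∀ f ∈ {f : Hs0 s | rate s v₀ f ≤ ENNReal.ofReal r},
        Summable fun n : ℤ => ‖coeff s f n‖ ^ 2 := by
  have hv : Memℓp v₀ 2 := memℓp_two_iff_summable_sq.2 hvsum
  refine ⟨?_, fun f hf => memℓp_two_iff_summable_sq.1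
    (memℓp_coeff_of_rate_ne_top hv (ne_top_of_le_ne_top ENNReal.ofReal_ne_top hf))⟩
  have hbound : Memℓp (fun n => ‖v₀ n‖ + √(2 * r.toNNReal) * wt s n) 2 :=
    hv.norm.add ((memℓp_wt hs).const_mul _)
  have hcube := (isClosed_Hs0 s).isClosedEmbedding_subtypeVal.isCompact_preimage
    (lp.isCompact_setOf_norm_le ENNReal.ofNat_ne_top hbound)
  exact hcube.of_isClosed_subset ((lowerSemicontinuous_rate s v₀).isClosed_preimage _)
    fun f hf => norm_coe_apply_le_of_rate_le (by linarith) hf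

/-- compactness of rate-function sublevel sets: for `s < -1/2` and
`v₀ ∈ L²₀(𝕋)`, for every finite `r ≥ 0` the sublevel set
`K_r = {f ∈ H^s₀(𝕋) : I(f) ≤ r}` is compact in `H^s₀(𝕋)` (with the `H^s` norm topology),
and `K_r ⊆ L²₀(𝕋)` (i.e. every `f ∈ K_r` has square-summable Fourier coefficients). -/
theorem rate_sublevel_compact
    (s : ℝ) (hs : s < -(1 / 2)) (v₀ : ℤ → ℂ) (hv0 : v₀ 0 = 0)
    (hvsym : ∀ n : ℤ, v₀ (-n) = conj (v₀ n)) (hvsum : Summable fun n : ℤ => ‖v₀ n‖ ^ 2)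
    (r : ℝ) (hr : 0 ≤ r) :
    IsCompact {f : Hs0 s | rate s v₀ f ≤ ENNReal.ofReal r} ∧
      ∀ f ∈ {f : Hs0 s | rate s v₀ f ≤ ENNReal.ofReal r},
        Summable fun n : ℤ => ‖coeff s f n‖ ^ 2 :=
  rate_sublevel_compact_general s hs v₀ hvsum r
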